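/- arXiv:2202.04005 — 3 statements merged into one kernel-verified Lean document; each statement's English description precedes it below -/
import Mathlib

section
/- In the feature-map setup, the approximate posterior variance decomposes exactly as σ̄_n²(x) = ‖φ(x) − P φ(x)‖² + ‖P φ(x) − Σ_{i=1}^n (V_n(x))_i · P φ(x_i)‖² + τ² ‖V_n(x)‖²_{ℓ²}, where P : H → H is the orthogonal projection onto the span of {φ(z_1), …, φ(z_m)}. (This is the feature-space form of the paper's Theorem 1: the first term equals the squared worst-case projection error over the unit ball of the RKHS of k, the second the squared worst-case noise-free prediction error over the unit ball of the RKHS of the Nyström kernel κ, and the third the noise contribution.) -/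
open Matrix MeasureTheory ProbabilityTheory
open scoped RealInnerProductSpace

variable {H : Type*} [NormedAddCommGroup H] [InnerProductSpace ℝ H] {X : Type*}

/-- The kernel associated with the feature map `φ`: `k(a,b) = ⟪φ(a), φ(b)⟫`. -/
noncomputable def kern (φ : X → H) (a b : X) : ℝ := ⟪φ a, φ b⟫

/-- The vector `k_Z(x) = (k(x,z_1), …, k(x,z_m))`. -/
noncomputable def kZvec {m : ℕ} (φ : X → H) (z : Fin m → X) (x : X) : Fin m → ℝ :=
  fun i => kern φ x (z i)

/-- The Gram matrix `K_ZZ = [k(z_i, z_j)]`. -/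
noncomputable def KZZ {m : ℕ} (φ : X → H) (z : Fin m → X) : Matrix (Fin m) (Fin m) ℝ :=
  Matrix.of fun i j => kern φ (z i) (z j)

/-- The cross-kernel matrix `K_XZ = [k(x_i, z_j)]`. -/
noncomputable def KXZ {n m : ℕ} (φ : X → H) (xs : Fin n → X) (z : Fin m → X) :
    Matrix (Fin n) (Fin m) ℝ :=
  Matrix.of fun i j => kern φ (xs i) (z j)

/-- The Gram matrix `K_XX = [k(x_i, x_j)]`. -/
noncomputable def KXX {n : ℕ} (φ : X → H) (xs : Fin n → X) : Matrix (Fin n) (Fin n) ℝ :=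
  Matrix.of fun i j => kern φ (xs i) (xs j)

/-- The weight vector `V_n(x)`, with `V_n(x)ᵀ = k_Z(x)ᵀ (τ² K_ZZ + K_XZᵀ K_XZ)⁻¹ K_XZᵀ`. -/
noncomputable def Vn {n m : ℕ} (φ : X → H) (τ : ℝ) (xs : Fin n → X) (z : Fin m → X) (x : X) :
    Fin n → ℝ :=
  Matrix.vecMul (Matrix.vecMul (kZvec φ z x) (τ ^ 2 • KZZ φ z + (KXZ φ xs z)ᵀ * KXZ φ xs z)⁻¹)
    (KXZ φ xs z)ᵀ

/-- The approximate (sparse) posterior variance `σ̄_n²(x)`. -/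
noncomputable def approxVarSq {n m : ℕ} (φ : X → H) (τ : ℝ) (xs : Fin n → X) (z : Fin m → X)
    (x : X) : ℝ :=
  kern φ x x - kZvec φ z x ⬝ᵥ ((KZZ φ z)⁻¹).mulVec (kZvec φ z x)
    + kZvec φ z x ⬝ᵥ
      ((KZZ φ z + (τ ^ 2)⁻¹ • ((KXZ φ xs z)ᵀ * KXZ φ xs z))⁻¹).mulVec (kZvec φ z x)

/-- The approximate posterior standard deviation `σ̄_n(x) ≥ 0`. -/
noncomputable def approxSig {n m : ℕ} (φ : X → H) (τ : ℝ) (xs : Fin n → X) (z : Fin m → X)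
    (x : X) : ℝ :=
  Real.sqrt (approxVarSq φ τ xs z x)

lemma inner_sum_smul {m : ℕ} (φ : X → H) (z : Fin m → X) (a b : Fin m → ℝ) :
    ⟪∑ i, a i • φ (z i), ∑ j, b j • φ (z j)⟫ = a ⬝ᵥ (KZZ φ z *ᵥ b) := by
  rw [sum_inner]
  simp only [inner_sum, real_inner_smul_left, real_inner_smul_right, dotProduct,
    Matrix.mulVec, dotProduct, KZZ, kern, Matrix.of_apply, Finset.mul_sum, mul_assoc]
  exact Finset.sum_congr rfl fun i _ => Finset.sum_congr rfl fun j _ => by ring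

lemma gram_posDef {m : ℕ} (φ : X → H) (z : Fin m → X)
    (hlin : LinearIndependent ℝ fun i => φ (z i)) : (KZZ φ z).PosDef := by
  rw [Matrix.posDef_iff_dotProduct_mulVec]
  constructor
  · ext i j
    simp [Matrix.IsHermitian, Matrix.conjTranspose_apply, KZZ, kern, real_inner_comm]
  · intro a ha
    have key : star a ⬝ᵥ (KZZ φ z *ᵥ a) = ‖∑ i, a i • φ (z i)‖ ^ 2 := by
      rw [star_trivial, ← real_inner_self_eq_norm_sq, inner_sum_smul]
    rw [key]
    have hne : ∑ i, a i • φ (z i) ≠ 0 := by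
      intro h0
      exact ha (funext fun i => Fintype.linearIndependent_iff.mp hlin a h0 i)
    exact pow_pos (norm_pos_iff.mpr hne) 2

lemma orth_of_forall {m : ℕ} (φ : X → H) (z : Fin m → X) (u : H)
    (h : ∀ i, ⟪u, φ (z i)⟫ = 0) :
    ∀ w ∈ Submodule.span ℝ (Set.range fun i => φ (z i)), ⟪u, w⟫ = 0 := by
  intro w hw
  induction hw using Submodule.span_induction with
  | mem w hw => obtain ⟨i, rfl⟩ := hw; exact h i
  | zero => simp
  | add a b _ _ ha hb => rw [inner_add_right, ha, hb, add_zero]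
  | smul r a _ ha => rw [real_inner_smul_right, ha, mul_zero]

lemma dp_mulVec_mulVec {m n p : ℕ} (M : Matrix (Fin m) (Fin n) ℝ) (N : Matrix (Fin m) (Fin p) ℝ)
    (a : Fin n → ℝ) (b : Fin p → ℝ) :
    (M *ᵥ a) ⬝ᵥ (N *ᵥ b) = a ⬝ᵥ ((Mᵀ * N) *ᵥ b) := by
  rw [← Matrix.mulVec_mulVec]
  conv_rhs => rw [Matrix.dotProduct_mulVec, Matrix.vecMul_transpose]

lemma proj_formula {m : ℕ} (φ : X → H) (z : Fin m → X)
    (hlin : LinearIndependent ℝ fun i => φ (z i))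
    (P : H →L[ℝ] H)
    (hPmem : ∀ v : H, P v ∈ Submodule.span ℝ (Set.range fun i => φ (z i)))
    (hPorth : ∀ v : H, ∀ w ∈ Submodule.span ℝ (Set.range fun i => φ (z i)), ⟪v - P v, w⟫ = 0)
    (y : X) :
    P (φ y) = ∑ j, ((KZZ φ z)⁻¹ *ᵥ kZvec φ z y) j • φ (z j) := by
  have hK := gram_posDef φ z hlin
  have hdet : IsUnit (KZZ φ z).det := hK.det_pos.ne'.isUnit
  have hKinv : KZZ φ z * (KZZ φ z)⁻¹ = 1 := Matrix.mul_nonsing_inv _ hdet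
  set c := (KZZ φ z)⁻¹ *ᵥ kZvec φ z y with hc
  set w := ∑ j, c j • φ (z j) with hw
  have hwS : w ∈ Submodule.span ℝ (Set.range fun i => φ (z i)) :=
    Submodule.sum_mem _ fun j _ => Submodule.smul_mem _ _ (Submodule.subset_span ⟨j, rfl⟩)
  have horthgen : ∀ i, ⟪φ y - w, φ (z i)⟫ = 0 := by
    intro i
    rw [inner_sub_left]
    have h1 : ⟪w, φ (z i)⟫ = (KZZ φ z *ᵥ c) i := by
      rw [hw, sum_inner]
      simp only [real_inner_smul_left, Matrix.mulVec, dotProduct, KZZ, kern,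
        Matrix.of_apply]
      exact Finset.sum_congr rfl fun j _ => by rw [real_inner_comm]; ring
    rw [h1, hc, Matrix.mulVec_mulVec, hKinv, Matrix.one_mulVec]
    show (⟪φ y, φ (z i)⟫ : ℝ) - kZvec φ z y i = 0
    simp [kZvec, kern]
  have horthS := orth_of_forall φ z _ horthgen
  have huS : P (φ y) - w ∈ Submodule.span ℝ (Set.range fun i => φ (z i)) :=
    Submodule.sub_mem _ (hPmem _) hwS
  have hzero : ⟪P (φ y) - w, P (φ y) - w⟫ = 0 := by
    calc ⟪P (φ y) - w, P (φ y) - w⟫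
        = ⟪φ y - w, P (φ y) - w⟫ - ⟪φ y - P (φ y), P (φ y) - w⟫ := by
          rw [← inner_sub_left]; congr 1; abel
      _ = 0 := by rw [horthS _ huS, hPorth (φ y) _ huS, sub_zero]
  exact sub_eq_zero.mp (inner_self_eq_zero.mp hzero)

/-- **Paper's Theorem 1 (feature-space form)**: the approximate posterior variance decomposes
as the squared projection error, plus the squared in-subspace noise-free prediction error,
plus the noise term `τ² ‖V_n(x)‖²`, where `P` is the orthogonal projection onto
`span {φ(z_1), …, φ(z_m)}`. -/
theorem approx_posterior_variance_decomposition
    [Nonempty X] (φ : X → H) (τ : ℝ) (hτ : 0 < τ)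
    {m n : ℕ} (z : Fin m → X) (xs : Fin n → X)
    (hlin : LinearIndependent ℝ fun i => φ (z i))
    (P : H →L[ℝ] H)
    (hPmem : ∀ v : H, P v ∈ Submodule.span ℝ (Set.range fun i => φ (z i)))
    (hPorth : ∀ v : H, ∀ w ∈ Submodule.span ℝ (Set.range fun i => φ (z i)), ⟪v - P v, w⟫ = 0)
    (x : X) :
    approxVarSq φ τ xs z x
      = ‖φ x - P (φ x)‖ ^ 2
        + ‖P (φ x) - ∑ i, Vn φ τ xs z x i • P (φ (xs i))‖ ^ 2
        + τ ^ 2 * ∑ i, Vn φ τ xs z x i ^ 2 := by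
  classical
  have hτ2 : (0:ℝ) < τ ^ 2 := by positivity
  set K := KZZ φ z with hKdef
  set A := KXZ φ xs z with hAdef
  set kx := kZvec φ z x with hkxdef
  set B := τ ^ 2 • K + Aᵀ * A with hBdef
  -- basic facts about K
  have hK := gram_posDef φ z hlin
  have hKdet : IsUnit K.det := hK.det_pos.ne'.isUnit
  have hKmul : K * K⁻¹ = 1 := Matrix.mul_nonsing_inv _ hKdet
  have hKmul' : K⁻¹ * K = 1 := Matrix.nonsing_inv_mul _ hKdet
  have hKsymm : Kᵀ = K := by
    ext i j; simpa [Matrix.conjTranspose_apply] using congrFun (congrFun hK.1 i) j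
  -- B is positive definite
  have hAsymm : (Aᵀ * A)ᵀ = Aᵀ * A := by
    rw [Matrix.transpose_mul, Matrix.transpose_transpose]
  have hAA : (Aᵀ * A).PosSemidef := by
    have h := Matrix.posSemidef_conjTranspose_mul_self A
    have : Aᴴ = Aᵀ := by ext i j; simp [Matrix.conjTranspose_apply]
    rwa [this] at h
  have hBsymm : Bᵀ = B := by
    rw [hBdef, Matrix.transpose_add, Matrix.transpose_smul, hKsymm, hAsymm]
  have hBpos : B.PosDef := by
    rw [Matrix.posDef_iff_dotProduct_mulVec]
    constructor
    · show Bᴴ = B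
      have : Bᴴ = Bᵀ := by ext i j; simp [Matrix.conjTranspose_apply]
      rw [this, hBsymm]
    · intro a ha
      have h1 : (0:ℝ) < star a ⬝ᵥ (K *ᵥ a) := hK.dotProduct_mulVec_pos ha
      have h2 : (0:ℝ) ≤ star a ⬝ᵥ ((Aᵀ * A) *ᵥ a) := hAA.dotProduct_mulVec_nonneg a
      have : star a ⬝ᵥ (B *ᵥ a)
          = τ ^ 2 * (star a ⬝ᵥ (K *ᵥ a)) + star a ⬝ᵥ ((Aᵀ * A) *ᵥ a) := by
        rw [hBdef, Matrix.add_mulVec, dotProduct_add, Matrix.smul_mulVec,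
          dotProduct_smul, smul_eq_mul]
      rw [this]
      have := mul_pos hτ2 h1
      linarith
  have hBdet : IsUnit B.det := hBpos.det_pos.ne'.isUnit
  have hBmul : B * B⁻¹ = 1 := Matrix.mul_nonsing_inv _ hBdet
  have hBmul' : B⁻¹ * B = 1 := Matrix.nonsing_inv_mul _ hBdet
  have hBinvsymm : (B⁻¹)ᵀ = B⁻¹ := by rw [Matrix.transpose_nonsing_inv, hBsymm]
  -- the weight vector
  have hvformula : Vn φ τ xs z x = (A * B⁻¹) *ᵥ kx := by
    rw [Vn]
    show (kx ᵥ* B⁻¹) ᵥ* Aᵀ = (A * B⁻¹) *ᵥ kx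
    rw [Matrix.vecMul_transpose]
    have : kx ᵥ* B⁻¹ = B⁻¹ *ᵥ kx := by
      conv_lhs => rw [← hBinvsymm, Matrix.vecMul_transpose]
    rw [this, Matrix.mulVec_mulVec]
  -- projection formulas
  have hPx : P (φ x) = ∑ j, (K⁻¹ *ᵥ kx) j • φ (z j) :=
    proj_formula φ z hlin P hPmem hPorth x
  have hPxs : ∀ i, P (φ (xs i)) = ∑ j, (K⁻¹ *ᵥ kZvec φ z (xs i)) j • φ (z j) :=
    fun i => proj_formula φ z hlin P hPmem hPorth (xs i)
  -- Term 1
  have hT1 : ‖φ x - P (φ x)‖ ^ 2 = kern φ x x - kx ⬝ᵥ (K⁻¹ *ᵥ kx) := by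
    have h0 : ⟪φ x - P (φ x), P (φ x)⟫ = 0 := hPorth (φ x) _ (hPmem _)
    have h1 : ‖φ x - P (φ x)‖ ^ 2 = ⟪φ x - P (φ x), φ x⟫ := by
      rw [← real_inner_self_eq_norm_sq]
      conv_lhs => rw [show φ x - P (φ x) = φ x - P (φ x) from rfl]
      rw [inner_sub_right, h0, sub_zero]
    rw [h1, inner_sub_left]
    have h2 : ⟪P (φ x), φ x⟫ = kx ⬝ᵥ (K⁻¹ *ᵥ kx) := by
      rw [hPx, sum_inner, dotProduct]
      exact Finset.sum_congr rfl fun j _ => by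
        rw [real_inner_smul_left, real_inner_comm]
        show (K⁻¹ *ᵥ kx) j * kx j = kx j * (K⁻¹ *ᵥ kx) j
        ring
    rw [h2]; rfl
  -- rewrite the weighted sum of projections
  have hsum_eq : ∑ i, Vn φ τ xs z x i • P (φ (xs i))
      = ∑ j, (K⁻¹ *ᵥ ((Vn φ τ xs z x) ᵥ* A)) j • φ (z j) := by
    calc ∑ i, Vn φ τ xs z x i • P (φ (xs i))
        = ∑ i, ∑ j, (Vn φ τ xs z x i * (K⁻¹ *ᵥ kZvec φ z (xs i)) j) • φ (z j) := by
          refine Finset.sum_congr rfl fun i _ => ?_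
          rw [hPxs i, Finset.smul_sum]
          exact Finset.sum_congr rfl fun j _ => by rw [smul_smul]
      _ = ∑ j, (∑ i, Vn φ τ xs z x i * (K⁻¹ *ᵥ kZvec φ z (xs i)) j) • φ (z j) := by
          rw [Finset.sum_comm]
          exact Finset.sum_congr rfl fun j _ => (Finset.sum_smul).symm
      _ = ∑ j, (K⁻¹ *ᵥ ((Vn φ τ xs z x) ᵥ* A)) j • φ (z j) := by
          refine Finset.sum_congr rfl fun j _ => ?_
          congr 1
          simp only [Matrix.mulVec, Matrix.vecMul, dotProduct, Finset.mul_sum,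
            hAdef, KXZ, Matrix.of_apply, Matrix.transpose_apply]
          rw [Finset.sum_comm]
          exact Finset.sum_congr rfl fun l _ => Finset.sum_congr rfl fun i _ => by
            show Vn φ τ xs z x i * (K⁻¹ j l * kZvec φ z (xs i) l)
              = K⁻¹ j l * (Vn φ τ xs z x i * kern φ (xs i) (z l))
            rw [show kZvec φ z (xs i) l = kern φ (xs i) (z l) from rfl]; ring
  -- the residual vector
  have hd : kx - (Vn φ τ xs z x) ᵥ* A = (τ ^ 2 • (K * B⁻¹)) *ᵥ kx := by
    rw [hvformula, ← Matrix.mulVec_transpose, Matrix.mulVec_mulVec]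
    have hM : Aᵀ * (A * B⁻¹) = 1 - τ ^ 2 • (K * B⁻¹) := by
      rw [← Matrix.mul_assoc]
      have hAAeq : Aᵀ * A = B - τ ^ 2 • K := by rw [hBdef]; abel
      rw [hAAeq, Matrix.sub_mul, hBmul, Matrix.smul_mul]
    rw [hM, Matrix.sub_mulVec, Matrix.one_mulVec, sub_sub_cancel]
  -- Term 2
  have hT2 : ‖P (φ x) - ∑ i, Vn φ τ xs z x i • P (φ (xs i))‖ ^ 2
      = kx ⬝ᵥ ((τ ^ 2 • τ ^ 2 • (B⁻¹ * (K * B⁻¹))) *ᵥ kx) := by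
    have hvec : P (φ x) - ∑ i, Vn φ τ xs z x i • P (φ (xs i))
        = ∑ j, ((K⁻¹ * (τ ^ 2 • (K * B⁻¹))) *ᵥ kx) j • φ (z j) := by
      rw [hPx, hsum_eq, ← Finset.sum_sub_distrib]
      refine Finset.sum_congr rfl fun j _ => ?_
      rw [← sub_smul]
      congr 1
      rw [← Matrix.mulVec_mulVec, ← hd]
      simp [Matrix.mulVec_sub]
    rw [hvec, ← real_inner_self_eq_norm_sq, inner_sum_smul, ← hKdef]
    set D := τ ^ 2 • (K * B⁻¹) with hD
    rw [Matrix.mulVec_mulVec, ← Matrix.mul_assoc, hKmul, Matrix.one_mul]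
    rw [show (K⁻¹ * D) *ᵥ kx ⬝ᵥ (D *ᵥ kx) = kx ⬝ᵥ (((K⁻¹ * D)ᵀ * D) *ᵥ kx) from
      dp_mulVec_mulVec _ _ _ _]
    congr 2
    rw [Matrix.transpose_mul, Matrix.transpose_nonsing_inv, hKsymm, hD,
      Matrix.transpose_smul, Matrix.transpose_mul, hBinvsymm, hKsymm]
    rw [Matrix.smul_mul, Matrix.mul_assoc, hKmul, Matrix.mul_one, Matrix.smul_mul,
      Matrix.mul_smul]
  -- Term 3
  have hT3 : τ ^ 2 * ∑ i, Vn φ τ xs z x i ^ 2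
      = kx ⬝ᵥ ((τ ^ 2 • (B⁻¹ * (Aᵀ * A * B⁻¹))) *ᵥ kx) := by
    have hvv : ∑ i, Vn φ τ xs z x i ^ 2 = Vn φ τ xs z x ⬝ᵥ Vn φ τ xs z x := by
      simp [dotProduct, sq]
    rw [hvv, hvformula, dp_mulVec_mulVec]
    rw [Matrix.smul_mulVec, dotProduct_smul, smul_eq_mul]
    congr 3
    rw [Matrix.transpose_mul, hBinvsymm, Matrix.mul_assoc, ← Matrix.mul_assoc Aᵀ A B⁻¹]
  -- the inverse identity
  have hCinv : (K + (τ ^ 2)⁻¹ • (Aᵀ * A))⁻¹ = τ ^ 2 • B⁻¹ := by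
    apply Matrix.inv_eq_right_inv
    have hCeq : K + (τ ^ 2)⁻¹ • (Aᵀ * A) = (τ ^ 2)⁻¹ • B := by
      rw [hBdef, smul_add, smul_smul, inv_mul_cancel₀ hτ2.ne', one_smul]
    rw [hCeq, Matrix.smul_mul, Matrix.mul_smul, hBmul, smul_smul,
      inv_mul_cancel₀ hτ2.ne', one_smul]
  -- final assembly
  rw [hT1, hT2, hT3]
  show kern φ x x - kx ⬝ᵥ (K⁻¹ *ᵥ kx) + kx ⬝ᵥ ((K + (τ ^ 2)⁻¹ • (Aᵀ * A))⁻¹ *ᵥ kx) = _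
  rw [hCinv]
  have hfin : (τ ^ 2 • (B⁻¹ : Matrix (Fin m) (Fin m) ℝ))
      = τ ^ 2 • τ ^ 2 • (B⁻¹ * (K * B⁻¹)) + τ ^ 2 • (B⁻¹ * (Aᵀ * A * B⁻¹)) := by
    rw [smul_smul, ← Matrix.mul_assoc]
    have : (τ ^ 2 * τ ^ 2) • (B⁻¹ * K * B⁻¹) = τ ^ 2 • (B⁻¹ * (τ ^ 2 • K) * B⁻¹) := by
      rw [Matrix.mul_smul, Matrix.smul_mul, smul_smul]
    rw [this, ← Matrix.mul_assoc, ← smul_add, ← Matrix.add_mul, ← Matrix.mul_add, ← hBdef,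
      hBmul', Matrix.one_mul]
  rw [hfin, Matrix.add_mulVec, dotProduct_add]
  ring
end

section
/- Let H be a real Hilbert space, X a set, φ : X → H a map, and k(x, x') = ⟪φ(x), φ(x')⟫; fix τ > 0 and points x_1, …, x_{n+1} ∈ X. For j ∈ {n, n+1}, let σ_j²(x) = k(x, x) − k_{X_j}(x)ᵀ (K_{X_j X_j} + τ² I_j)⁻¹ k_{X_j}(x), where K_{X_j X_j} = [k(x_a, x_b)]_{a,b ≤ j} and k_{X_j}(x) = (k(x, x_1), …, k(x, x_j)). Then for every x ∈ X, σ_{n+1}²(x) ≤ σ_n²(x): conditioning on a larger set of data points can only reduce the exact posterior variance. -/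
open Matrix MeasureTheory ProbabilityTheory
open scoped RealInnerProductSpace

variable {H : Type*} [NormedAddCommGroup H] [InnerProductSpace ℝ H] {X : Type*}

lemma gram_quad (φ : X → H) {m : ℕ} (x : Fin m → X) (v : Fin m → ℝ) :
    v ⬝ᵥ (KXX φ x).mulVec v = ⟪∑ i, v i • φ (x i), ∑ j, v j • φ (x j)⟫ := by
  simp [dotProduct, Matrix.mulVec, KXX, kern, inner_sum, sum_inner,
    real_inner_smul_left, real_inner_smul_right, Finset.mul_sum]
  rw [← real_inner_self_eq_norm_sq, sum_inner]
  simp only [inner_sum, real_inner_smul_left, real_inner_smul_right, Finset.mul_sum]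
  refine Finset.sum_congr rfl fun i _ => Finset.sum_congr rfl fun j _ => ?_
  rw [real_inner_comm]; ring

lemma reg_posDef (φ : X → H) {τ : ℝ} (hτ : 0 < τ) {m : ℕ} (x : Fin m → X) :
    (KXX φ x + τ ^ 2 • (1 : Matrix (Fin m) (Fin m) ℝ)).PosDef := by
  refine Matrix.PosDef.of_dotProduct_mulVec_pos ?_ ?_
  · ext i j
    simp [KXX, kern, Matrix.conjTranspose_apply, Matrix.one_apply, eq_comm]
    rw [real_inner_comm]
  · intro v hv
    have h1 : v ⬝ᵥ (KXX φ x).mulVec v ≥ 0 := by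
      rw [gram_quad]; exact real_inner_self_nonneg
    have h2 : (0:ℝ) < v ⬝ᵥ v := by
      have : v ⬝ᵥ v = ∑ i, v i ^ 2 := by simp [dotProduct, sq]
      rw [this]
      rcases Function.ne_iff.1 hv with ⟨i, hi⟩
      exact Finset.sum_pos' (fun j _ => sq_nonneg _)
        ⟨i, Finset.mem_univ i, pow_pos (abs_pos.2 hi) 2 |>.trans_eq (by rw [sq_abs])⟩
      
    have : star v ⬝ᵥ (KXX φ x + τ ^ 2 • 1).mulVec v
        = v ⬝ᵥ (KXX φ x).mulVec v + τ ^ 2 * (v ⬝ᵥ v) := by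
      simp [Matrix.add_mulVec, Matrix.smul_mulVec, dotProduct_add,
        dotProduct_smul, smul_eq_mul]
    rw [this]
    nlinarith [mul_pos (pow_pos hτ 2) h2]

lemma quad_le_inv {m : ℕ} {A : Matrix (Fin m) (Fin m) ℝ} (hA : A.PosDef)
    (k v : Fin m → ℝ) :
    2 * (v ⬝ᵥ k) - v ⬝ᵥ A.mulVec v ≤ k ⬝ᵥ (A⁻¹).mulVec k := by
  set u := (A⁻¹).mulVec k with hu
  have hdet : IsUnit A.det := hA.det_pos.ne'.isUnit
  have hAinv : A * A⁻¹ = 1 := Matrix.mul_nonsing_inv A hdet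
  have hAu : A.mulVec u = k := by
    rw [hu, Matrix.mulVec_mulVec, hAinv, Matrix.one_mulVec]
  have hT : Aᵀ = A := by
    ext i j
    simpa using congrFun (congrFun hA.1 i) j
  have h0 : 0 ≤ (v - u) ⬝ᵥ A.mulVec (v - u) := by
    simpa using hA.posSemidef.dotProduct_mulVec_nonneg (v - u)
  have hsym : u ⬝ᵥ A.mulVec v = k ⬝ᵥ v := by
    rw [Matrix.dotProduct_mulVec, ← Matrix.mulVec_transpose, hT, hAu]
  have hexp : (v - u) ⬝ᵥ A.mulVec (v - u)
      = v ⬝ᵥ A.mulVec v - v ⬝ᵥ k - k ⬝ᵥ v + u ⬝ᵥ k := by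
    rw [Matrix.mulVec_sub, dotProduct_sub, sub_dotProduct,
      sub_dotProduct, hAu, hsym]
    ring
  have hgoal : k ⬝ᵥ (A⁻¹).mulVec k = u ⬝ᵥ k := by
    rw [← hu, dotProduct_comm]
  have hc : k ⬝ᵥ v = v ⬝ᵥ k := dotProduct_comm _ _
  linarith [h0, hexp.symm ▸ h0]

/-- Conditioning on a larger set of data points can only reduce the exact posterior
variance: `σ_{n+1}²(x) ≤ σ_n²(x)`. -/
theorem exact_posterior_variance_antitone
    (φ : X → H) (τ : ℝ) (hτ : 0 < τ) {n : ℕ} (x : Fin (n + 1) → X) (y : X) :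
    kern φ y y - (fun i => kern φ y (x i)) ⬝ᵥ
        ((KXX φ x + τ ^ 2 • 1)⁻¹).mulVec (fun i => kern φ y (x i))
      ≤ kern φ y y - (fun i : Fin n => kern φ y (x i.castSucc)) ⬝ᵥ
        ((KXX φ (fun i : Fin n => x i.castSucc) + τ ^ 2 • 1)⁻¹).mulVec
          (fun i => kern φ y (x i.castSucc)) := by
  set x' : Fin n → X := fun i => x i.castSucc with hx'
  set k : Fin (n + 1) → ℝ := fun i => kern φ y (x i) with hk
  set k' : Fin n → ℝ := fun i => kern φ y (x' i) with hk'
  set K : Matrix (Fin (n + 1)) (Fin (n + 1)) ℝ := KXX φ x + τ ^ 2 • 1 with hK'def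
  set K' : Matrix (Fin n) (Fin n) ℝ := KXX φ x' + τ ^ 2 • 1 with hK''def
  have hK : K.PosDef := reg_posDef φ hτ x
  have hKp : K'.PosDef := reg_posDef φ hτ x'
  suffices h : k' ⬝ᵥ (K'⁻¹).mulVec k' ≤ k ⬝ᵥ (K⁻¹).mulVec k by
    simp only [hk, hk', hx'] at h ⊢
    linarith
  set u' : Fin n → ℝ := (K'⁻¹).mulVec k' with hu'
  have hK'u' : K'.mulVec u' = k' := by
    rw [hu', Matrix.mulVec_mulVec, Matrix.mul_nonsing_inv _ hKp.det_pos.ne'.isUnit,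
      Matrix.one_mulVec]
  set v : Fin (n + 1) → ℝ := Fin.snoc u' 0 with hv
  have h1 : v ⬝ᵥ k = u' ⬝ᵥ k' := by
    simp [dotProduct, Fin.sum_univ_castSucc, hv, hk', hk, hx']
  have hKv : ∀ i : Fin n, K.mulVec v (Fin.castSucc i) = K'.mulVec u' i := by
    intro i
    simp [Matrix.mulVec, dotProduct, Fin.sum_univ_castSucc, hv, hK'def, hK''def,
      KXX, kern, Matrix.one_apply, hx', Fin.castSucc_inj]
  have h2 : v ⬝ᵥ K.mulVec v = u' ⬝ᵥ K'.mulVec u' := by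
    rw [dotProduct, dotProduct, Fin.sum_univ_castSucc]
    simp only [hv, Fin.snoc_castSucc, Fin.snoc_last, zero_mul, add_zero]
    exact Finset.sum_congr rfl fun i _ => by rw [hKv i]
  have h3 : u' ⬝ᵥ K'.mulVec u' = u' ⬝ᵥ k' := by rw [hK'u']
  have h4 : k' ⬝ᵥ (K'⁻¹).mulVec k' = u' ⬝ᵥ k' := by rw [← hu', dotProduct_comm]
  have h5 := quad_le_inv hK k v
  linarith
end

section
/- In the feature-map setup, under the RKHS-function assumption (f(x) = ⟪θ, φ(x)⟫ with ‖θ‖ ≤ C_k) and the spectral-error bound K_XX − K_XZ K_ZZ⁻¹ K_XZᵀ ⪯ λ I_n with λ ≥ 0, the noise-free prediction error of the sparse approximate regressor satisfies, for every x ∈ X: |f(x) − V_n(x)ᵀ (f(x_1), …, f(x_n))| ≤ (2 + √λ/τ) C_k σ̄_n(x). (This is the deterministic part of the paper's confidence bound, combining the projection error, the in-subspace prediction error, and the projection-residual term.) -/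
open Matrix MeasureTheory ProbabilityTheory
open scoped RealInnerProductSpace

variable {H : Type*} [NormedAddCommGroup H] [InnerProductSpace ℝ H] {X : Type*}

lemma aux_inner_lc_right {m : ℕ} (h : H) (v : Fin m → H) (c : Fin m → ℝ) :
    ⟪h, ∑ j, c j • v j⟫ = (fun j => (⟪h, v j⟫:ℝ)) ⬝ᵥ c := by
  rw [inner_sum]
  simp [dotProduct, real_inner_smul_right, mul_comm]

lemma aux_inner_lc_lc {m : ℕ} (v : Fin m → H) (c d : Fin m → ℝ) :
    ⟪∑ i, c i • v i, ∑ j, d j • v j⟫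
      = c ⬝ᵥ ((Matrix.of fun i j => (⟪v i, v j⟫:ℝ)) *ᵥ d) := by
  rw [sum_inner]
  simp [dotProduct, Matrix.mulVec, real_inner_smul_left, aux_inner_lc_right,
    Finset.mul_sum, mul_comm, mul_left_comm]

lemma aux_gram_posDef {m : ℕ} (v : Fin m → H) (hlin : LinearIndependent ℝ v) :
    (Matrix.of fun i j => (⟪v i, v j⟫:ℝ)).PosDef := by
  apply Matrix.PosDef.of_dotProduct_mulVec_pos
  · ext i j
    simp [Matrix.conjTranspose_apply, real_inner_comm]
  · intro x hx
    have h0 : ∑ i, x i • v i ≠ 0 := by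
      intro h
      exact hx (funext fun i => Fintype.linearIndependent_iff.mp hlin x h i)
    have hpos : (0:ℝ) < ⟪∑ i, x i • v i, ∑ i, x i • v i⟫ := by
      rw [real_inner_self_eq_norm_sq]
      exact pow_pos (norm_pos_iff.mpr h0) 2
    rw [aux_inner_lc_lc v x x] at hpos
    simpa using hpos

lemma aux_dot_symm {p : ℕ} (S : Matrix (Fin p) (Fin p) ℝ) (hS : Sᵀ = S) (x y : Fin p → ℝ) :
    x ⬝ᵥ (S *ᵥ y) = y ⬝ᵥ (S *ᵥ x) := by
  rw [Matrix.dotProduct_mulVec, ← Matrix.mulVec_transpose, hS, dotProduct_comm]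

lemma aux_mul_entry {p q : ℕ} (A : Matrix (Fin p) (Fin q) ℝ) (S : Matrix (Fin q) (Fin q) ℝ)
    (i j : Fin p) : (A * S * Aᵀ) i j = A i ⬝ᵥ (S *ᵥ A j) := by
  simp [Matrix.mul_apply, Matrix.mulVec, dotProduct, Finset.mul_sum, Finset.sum_mul]
  rw [Finset.sum_comm]
  apply Finset.sum_congr rfl
  intro k _
  apply Finset.sum_congr rfl
  intro l _
  ring

/-- **The deterministic part of the paper's confidence bound**: the noise-free prediction
error of the sparse approximate regressor satisfies
`|f(x) − V_n(x)ᵀ f_{X_n}| ≤ (2 + √λ/τ) C_k σ̄_n(x)`. -/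
theorem noise_free_prediction_error_bound
    [Nonempty X] (φ : X → H) (τ : ℝ) (hτ : 0 < τ)
    {m n : ℕ} (z : Fin m → X) (xs : Fin n → X)
    (hlin : LinearIndependent ℝ fun i => φ (z i))
    (θ : H) (Ck : ℝ) (hCk : 0 < Ck) (hθ : ‖θ‖ ≤ Ck)
    (lam : ℝ) (hlam : 0 ≤ lam)
    (hspec : (lam • (1 : Matrix (Fin n) (Fin n) ℝ)
        - (KXX φ xs - KXZ φ xs z * (KZZ φ z)⁻¹ * (KXZ φ xs z)ᵀ)).PosSemidef) :
    ∀ x : X,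
      |⟪θ, φ x⟫ - Vn φ τ xs z x ⬝ᵥ (fun i => ⟪θ, φ (xs i)⟫)|
        ≤ (2 + Real.sqrt lam / τ) * Ck * approxSig φ τ xs z x := by
  intro x
  set A := KXZ φ xs z with hAdef
  set B := KZZ φ z with hBdef
  set b := kZvec φ z x with hbdef
  set M := τ ^ 2 • B + Aᵀ * A with hMdef
  clear_value M
  have hτ2 : (0:ℝ) < τ ^ 2 := pow_pos hτ 2
  have hB : B.PosDef := aux_gram_posDef (fun i => φ (z i)) hlin
  have hAtA : (Aᵀ * A).PosSemidef := by
    have := Matrix.posSemidef_conjTranspose_mul_self A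
    rwa [Matrix.conjTranspose_eq_transpose_of_trivial] at this
  have hBsymm : Bᵀ = B := by
    rw [← Matrix.conjTranspose_eq_transpose_of_trivial]; exact hB.isHermitian
  have hsmulB : (τ ^ 2 • B).PosDef := by
    apply Matrix.PosDef.of_dotProduct_mulVec_pos
    · rw [Matrix.IsHermitian, Matrix.conjTranspose_eq_transpose_of_trivial,
        Matrix.transpose_smul, hBsymm]
    · intro v hv
      have h1 := hB.dotProduct_mulVec_pos hv
      simp only [Matrix.smul_mulVec, dotProduct_smul, smul_eq_mul] at *
      exact mul_pos hτ2 h1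
  have hM : M.PosDef := by rw [hMdef]; exact hsmulB.add_posSemidef hAtA
  have hMdet : IsUnit M.det := isUnit_iff_ne_zero.mpr hM.det_pos.ne'
  have hBdet : IsUnit B.det := isUnit_iff_ne_zero.mpr hB.det_pos.ne'
  have hMM : M * M⁻¹ = 1 := Matrix.mul_nonsing_inv M hMdet
  have hBB : B * B⁻¹ = 1 := Matrix.mul_nonsing_inv B hBdet
  have hBBl : B⁻¹ * B = 1 := Matrix.nonsing_inv_mul B hBdet
  have hMisymm : (M⁻¹)ᵀ = M⁻¹ := by
    rw [← Matrix.conjTranspose_eq_transpose_of_trivial]; exact hM.inv.isHermitian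
  have hBisymm : (B⁻¹)ᵀ = B⁻¹ := by
    rw [← Matrix.conjTranspose_eq_transpose_of_trivial]; exact hB.inv.isHermitian
  set w := M⁻¹ *ᵥ b with hwdef
  clear_value w
  have hMw : M *ᵥ w = b := by
    rw [hwdef, Matrix.mulVec_mulVec, hMM, Matrix.one_mulVec]
  set V := A *ᵥ w with hVdef
  clear_value V
  have hV : Vn φ τ xs z x = V := by
    rw [Vn, ← hAdef, ← hBdef, ← hbdef, ← hMdef, hVdef, hwdef]
    rw [← hMisymm, Matrix.vecMul_transpose, Matrix.vecMul_transpose, hMisymm]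
  -- the variance identity
  have hbw : 0 ≤ b ⬝ᵥ w := by
    have := hM.inv.posSemidef.dotProduct_mulVec_nonneg b
    simpa [hwdef] using this
  have hinv : (B + (τ ^ 2)⁻¹ • (Aᵀ * A))⁻¹ = τ ^ 2 • M⁻¹ := by
    have h1 : B + (τ ^ 2)⁻¹ • (Aᵀ * A) = (τ ^ 2)⁻¹ • M := by
      rw [hMdef, smul_add, smul_smul, inv_mul_cancel₀ hτ2.ne', one_smul]
    rw [h1]
    apply Matrix.inv_eq_right_inv
    rw [Matrix.smul_mul, Matrix.mul_smul, smul_smul, inv_mul_cancel₀ hτ2.ne', one_smul, hMM]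
  have hvar : approxVarSq φ τ xs z x
      = (kern φ x x - b ⬝ᵥ (B⁻¹ *ᵥ b)) + τ ^ 2 * (b ⬝ᵥ w) := by
    rw [approxVarSq, ← hAdef, ← hBdef, ← hbdef, hinv, Matrix.smul_mulVec,
      dotProduct_smul, ← hwdef, smul_eq_mul]
  -- the Hilbert-space machinery
  set T : (Fin m → ℝ) →ₗ[ℝ] H := Fintype.linearCombination ℝ (fun j => φ (z j)) with hTdef
  have hT : ∀ c, T c = ∑ j, c j • φ (z j) := fun c => by
    rw [hTdef]; rfl
  clear_value T
  have hTT : ∀ c d, ⟪T c, T d⟫ = c ⬝ᵥ (B *ᵥ d) := by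
    intro c d
    rw [hT, hT, hBdef]
    exact aux_inner_lc_lc (fun j => φ (z j)) c d
  have hxT : ∀ c, ⟪φ x, T c⟫ = b ⬝ᵥ c := by
    intro c
    rw [hT, hbdef]
    exact aux_inner_lc_right (φ x) (fun j => φ (z j)) c
  have hxiT : ∀ (i : Fin n) c, ⟪φ (xs i), T c⟫ = A i ⬝ᵥ c := by
    intro i c
    rw [hT, hAdef]
    exact aux_inner_lc_right (φ (xs i)) (fun j => φ (z j)) c
  set e1 : H := φ x - T (B⁻¹ *ᵥ b) with he1def
  clear_value e1
  set e2 : H := T (τ ^ 2 • w) with he2def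
  clear_value e2
  set e3 : H := ∑ i, V i • (T (B⁻¹ *ᵥ (A i)) - φ (xs i)) with he3def
  clear_value e3
  -- decomposition
  have hAtAV : (Aᵀ * A) *ᵥ w = b - τ ^ 2 • (B *ᵥ w) := by
    have h2 : Aᵀ * A = M - τ ^ 2 • B := by rw [hMdef, add_sub_cancel_left]
    rw [h2, Matrix.sub_mulVec, hMw, Matrix.smul_mulVec]
  have hstep2 : ∑ i, V i • A i = Aᵀ *ᵥ V := by
    funext j
    simp [Matrix.mulVec, dotProduct, Matrix.transpose_apply, Finset.sum_apply,
      mul_comm]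
  have hsumV : ∑ i, V i • (B⁻¹ *ᵥ (A i)) = B⁻¹ *ᵥ ((Aᵀ * A) *ᵥ w) := by
    calc ∑ i, V i • (B⁻¹ *ᵥ (A i)) = ∑ i, B⁻¹.mulVecLin (V i • A i) := by
          simp [Matrix.mulVec_smul, Matrix.mulVecLin_apply]
      _ = B⁻¹.mulVecLin (∑ i, V i • A i) := (map_sum _ _ _).symm
      _ = B⁻¹ *ᵥ (Aᵀ *ᵥ V) := by rw [hstep2, Matrix.mulVecLin_apply]
      _ = B⁻¹ *ᵥ ((Aᵀ * A) *ᵥ w) := by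
          rw [hVdef]; simp only [Matrix.mulVec_mulVec, Matrix.mul_assoc]
  have hcoef : τ ^ 2 • w = B⁻¹ *ᵥ b - ∑ i, V i • (B⁻¹ *ᵥ (A i)) := by
    rw [hsumV, hAtAV, Matrix.mulVec_sub, Matrix.mulVec_smul, Matrix.mulVec_mulVec, hBBl,
      Matrix.one_mulVec]
    abel
  have hdecomp : φ x - ∑ i, V i • φ (xs i) = e1 + e2 + e3 := by
    have hmid : e2 = T (B⁻¹ *ᵥ b) - ∑ i, V i • T (B⁻¹ *ᵥ (A i)) := by
      rw [he2def, hcoef, map_sub, map_sum]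
      congr 1
      exact Finset.sum_congr rfl fun i _ => T.map_smul (V i) _
    have h3 : e3 = (∑ i, V i • T (B⁻¹ *ᵥ (A i))) - ∑ i, V i • φ (xs i) := by
      rw [he3def, ← Finset.sum_sub_distrib]
      exact Finset.sum_congr rfl fun i _ => smul_sub _ _ _
    rw [he1def, hmid, h3]
    abel
  -- norms
  have he1sq : ‖e1‖ ^ 2 = kern φ x x - b ⬝ᵥ (B⁻¹ *ᵥ b) := by
    rw [he1def, norm_sub_sq_real, ← real_inner_self_eq_norm_sq, ← real_inner_self_eq_norm_sq,
      hxT, hTT, Matrix.mulVec_mulVec, hBB, Matrix.one_mulVec]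
    have : (B⁻¹ *ᵥ b) ⬝ᵥ b = b ⬝ᵥ (B⁻¹ *ᵥ b) := dotProduct_comm _ _
    rw [this]
    show kern φ x x - 2 * (b ⬝ᵥ (B⁻¹ *ᵥ b)) + b ⬝ᵥ (B⁻¹ *ᵥ b) = _
    ring
  have hr0 : 0 ≤ kern φ x x - b ⬝ᵥ (B⁻¹ *ᵥ b) := he1sq ▸ sq_nonneg ‖e1‖
  have hs2nn : 0 ≤ approxVarSq φ τ xs z x := by
    rw [hvar]
    have : 0 ≤ τ ^ 2 * (b ⬝ᵥ w) := mul_nonneg hτ2.le hbw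
    linarith
  set s := approxSig φ τ xs z x with hsdef
  have hs_nonneg : 0 ≤ s := Real.sqrt_nonneg _
  have hs_sq : s ^ 2 = approxVarSq φ τ xs z x := Real.sq_sqrt hs2nn
  -- e1 bound
  have he1le : ‖e1‖ ^ 2 ≤ s ^ 2 := by
    rw [hs_sq, hvar, he1sq]
    have : 0 ≤ τ ^ 2 * (b ⬝ᵥ w) := mul_nonneg hτ2.le hbw
    linarith
  -- e2 bound
  have hwAw : 0 ≤ w ⬝ᵥ ((Aᵀ * A) *ᵥ w) := by simpa using hAtA.dotProduct_mulVec_nonneg w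
  have hsplit : τ ^ 2 * (w ⬝ᵥ (B *ᵥ w)) + w ⬝ᵥ ((Aᵀ * A) *ᵥ w) = b ⬝ᵥ w := by
    have h1 : w ⬝ᵥ (M *ᵥ w) = b ⬝ᵥ w := by rw [hMw, dotProduct_comm]
    rw [← h1, hMdef, Matrix.add_mulVec, dotProduct_add, Matrix.smul_mulVec,
      dotProduct_smul, smul_eq_mul]
  have he2sq : ‖e2‖ ^ 2 = τ ^ 2 * (τ ^ 2 * (w ⬝ᵥ (B *ᵥ w))) := by
    rw [he2def, ← real_inner_self_eq_norm_sq, hTT, Matrix.mulVec_smul, smul_dotProduct,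
      dotProduct_smul, smul_eq_mul, smul_eq_mul]
  have hwBw : 0 ≤ w ⬝ᵥ (B *ᵥ w) := by simpa using hB.posSemidef.dotProduct_mulVec_nonneg w
  have hkey : τ ^ 2 * (w ⬝ᵥ (B *ᵥ w)) ≤ b ⬝ᵥ w := by linarith [hsplit, hwAw]
  have he2le : ‖e2‖ ^ 2 ≤ s ^ 2 := by
    rw [hs_sq, hvar, he2sq]
    have h4 := mul_le_mul_of_nonneg_left hkey hτ2.le
    linarith [hr0, h4]
  -- e3 bound
  have hVV : V ⬝ᵥ V ≤ b ⬝ᵥ w := by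
    have h1 : V ⬝ᵥ V = w ⬝ᵥ ((Aᵀ * A) *ᵥ w) := by
      rw [hVdef, Matrix.dotProduct_mulVec (A *ᵥ w) A w, ← Matrix.mulVec_transpose,
        Matrix.mulVec_mulVec, dotProduct_comm]
    rw [h1]
    linarith [hsplit, mul_nonneg hτ2.le hwBw]
  have hE : ∀ i j, (⟪T (B⁻¹ *ᵥ (A i)) - φ (xs i), T (B⁻¹ *ᵥ (A j)) - φ (xs j)⟫ : ℝ)
      = (KXX φ xs - A * B⁻¹ * Aᵀ) i j := by
    intro i j
    have e11 : (⟪T (B⁻¹ *ᵥ (A i)), T (B⁻¹ *ᵥ (A j))⟫ : ℝ) = A i ⬝ᵥ (B⁻¹ *ᵥ A j) := by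
      rw [hTT, Matrix.mulVec_mulVec, hBB, Matrix.one_mulVec, dotProduct_comm,
        aux_dot_symm B⁻¹ hBisymm]
    have e12 : (⟪T (B⁻¹ *ᵥ (A i)), φ (xs j)⟫ : ℝ) = A i ⬝ᵥ (B⁻¹ *ᵥ A j) := by
      rw [real_inner_comm, hxiT, aux_dot_symm B⁻¹ hBisymm]
    have e21 : (⟪φ (xs i), T (B⁻¹ *ᵥ (A j))⟫ : ℝ) = A i ⬝ᵥ (B⁻¹ *ᵥ A j) := hxiT i _
    have e22 : (⟪φ (xs i), φ (xs j)⟫ : ℝ) = KXX φ xs i j := rfl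
    rw [inner_sub_left, inner_sub_right, inner_sub_right, e11, e12, e21, e22,
      Matrix.sub_apply, aux_mul_entry]
    ring
  have hEM : (Matrix.of fun i j =>
        (⟪T (B⁻¹ *ᵥ (A i)) - φ (xs i), T (B⁻¹ *ᵥ (A j)) - φ (xs j)⟫ : ℝ))
      = KXX φ xs - A * B⁻¹ * Aᵀ := by
    ext i j
    exact hE i j
  have he3sq : ‖e3‖ ^ 2 = V ⬝ᵥ ((KXX φ xs - A * B⁻¹ * Aᵀ) *ᵥ V) := by
    rw [he3def, ← real_inner_self_eq_norm_sq,
      aux_inner_lc_lc (fun i => T (B⁻¹ *ᵥ (A i)) - φ (xs i)) V V, hEM]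
  have hspec' : V ⬝ᵥ ((KXX φ xs - A * B⁻¹ * Aᵀ) *ᵥ V) ≤ lam * (V ⬝ᵥ V) := by
    have h0 := hspec.dotProduct_mulVec_nonneg V
    simp only [star_trivial, Matrix.sub_mulVec, Matrix.smul_mulVec, Matrix.one_mulVec,
      dotProduct_sub, dotProduct_smul, smul_eq_mul] at h0
    rw [Matrix.sub_mulVec, dotProduct_sub]
    linarith
  have he3le : ‖e3‖ ^ 2 ≤ lam * (b ⬝ᵥ w) := by
    rw [he3sq]
    calc V ⬝ᵥ ((KXX φ xs - A * B⁻¹ * Aᵀ) *ᵥ V) ≤ lam * (V ⬝ᵥ V) := hspec'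
    _ ≤ lam * (b ⬝ᵥ w) := mul_le_mul_of_nonneg_left hVV hlam
  -- assemble
  have h1 : ‖e1‖ ≤ s := by
    have := Real.sqrt_le_sqrt he1le
    rwa [Real.sqrt_sq (norm_nonneg _), Real.sqrt_sq hs_nonneg] at this
  have h2 : ‖e2‖ ≤ s := by
    have := Real.sqrt_le_sqrt he2le
    rwa [Real.sqrt_sq (norm_nonneg _), Real.sqrt_sq hs_nonneg] at this
  have h3 : ‖e3‖ ≤ Real.sqrt lam * s / τ := by
    have hrhs : (0:ℝ) ≤ Real.sqrt lam * s / τ :=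
      div_nonneg (mul_nonneg (Real.sqrt_nonneg _) hs_nonneg) hτ.le
    have hsq : ‖e3‖ ^ 2 ≤ (Real.sqrt lam * s / τ) ^ 2 := by
      rw [div_pow, mul_pow, Real.sq_sqrt hlam, hs_sq, hvar]
      rw [le_div_iff₀ hτ2]
      have hbw2 : τ ^ 2 * (b ⬝ᵥ w) ≤ (kern φ x x - b ⬝ᵥ (B⁻¹ *ᵥ b)) + τ ^ 2 * (b ⬝ᵥ w) := by
        linarith
      calc ‖e3‖ ^ 2 * τ ^ 2 ≤ (lam * (b ⬝ᵥ w)) * τ ^ 2 := by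
            exact mul_le_mul_of_nonneg_right he3le hτ2.le
        _ = lam * (τ ^ 2 * (b ⬝ᵥ w)) := by ring
        _ ≤ lam * ((kern φ x x - b ⬝ᵥ (B⁻¹ *ᵥ b)) + τ ^ 2 * (b ⬝ᵥ w)) :=
            mul_le_mul_of_nonneg_left hbw2 hlam
    have := Real.sqrt_le_sqrt hsq
    rwa [Real.sqrt_sq (norm_nonneg _), Real.sqrt_sq hrhs] at this
  have hEq : ⟪θ, φ x⟫ - Vn φ τ xs z x ⬝ᵥ (fun i => ⟪θ, φ (xs i)⟫)
      = ⟪θ, φ x - ∑ i, V i • φ (xs i)⟫ := by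
    rw [hV, inner_sub_right, inner_sum]
    simp [dotProduct, real_inner_smul_right, mul_comm]
  rw [hEq, hdecomp]
  calc |(⟪θ, e1 + e2 + e3⟫ : ℝ)| ≤ ‖θ‖ * ‖e1 + e2 + e3‖ := abs_real_inner_le_norm θ _
    _ ≤ Ck * (‖e1‖ + ‖e2‖ + ‖e3‖) := by
        apply mul_le_mul hθ _ (norm_nonneg _) hCk.le
        exact le_trans (norm_add_le _ _) (add_le_add_left (norm_add_le _ _) _)
    _ ≤ Ck * (s + s + Real.sqrt lam * s / τ) := by
        apply mul_le_mul_of_nonneg_left _ hCk.le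
        exact add_le_add (add_le_add h1 h2) h3
    _ = (2 + Real.sqrt lam / τ) * Ck * s := by ring
end
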